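/- Let {X_j} be a sequence of random variables admitting a regular phantom distribution function G. Then {X_j} admits a continuous phantom distribution function. -/

import Mathlib

open MeasureTheory Filter Topology Set

noncomputable section

/-- Event that the partial maximum `max_{0 ≤ j ≤ n-1} X_j` is at most `x`
(empty maximum interpreted as `-∞`, so the event is everything for `n = 0`). -/
def maxEvent {Ω : Type*} (X : ℕ → Ω → ℝ) (n : ℕ) (x : ℝ) : Set Ω :=
  {ω | ∀ j < n, X j ω ≤ x}

/-- `G` is a distribution function: nondecreasing, right-continuous, with limits
`0` at `-∞` and `1` at `+∞`. -/
def IsDistFun (G : ℝ → ℝ) : Prop :=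
  Monotone G ∧ (∀ x, ContinuousWithinAt G (Set.Ici x) x) ∧
    Tendsto G atBot (nhds 0) ∧ Tendsto G atTop (nhds 1)

/-- `G` is a phantom distribution function for `X` under `P`:
`sup_x |P(M_n ≤ x) - G(x)^n| → 0`. -/
def IsPhantom {Ω : Type*} [MeasurableSpace Ω] (P : Measure Ω) (X : ℕ → Ω → ℝ)
    (G : ℝ → ℝ) : Prop :=
  Tendsto (fun n => ⨆ x : ℝ, |(P (maxEvent X n x)).toReal - G x ^ n|) atTop (nhds 0)

/-- The right end `G_* = sup {x : G x < 1}`, as an extended real. -/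
def GstarE (G : ℝ → ℝ) : EReal := sSup ((fun x : ℝ => (x : EReal)) '' {x | G x < 1})

/-- The filter of real numbers approaching `c ∈ (-∞, +∞]` strictly from the left
(equals `atTop` when `c = ⊤`). -/
def leftFilter (c : EReal) : Filter ℝ :=
  Filter.comap (fun x : ℝ => (x : EReal)) (nhdsWithin c (Set.Iio c))

/-- Regularity in the sense of O'Brien: `G(G_*-) = 1` and
`(1 - G(x-))/(1 - G(x)) → 1` as `x → G_*-`. -/
def IsRegularDF (G : ℝ → ℝ) : Prop :=
  Tendsto G (leftFilter (GstarE G)) (nhds 1) ∧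
    Tendsto (fun x => (1 - Function.leftLim G x) / (1 - G x))
      (leftFilter (GstarE G)) (nhds 1)


/-!
Choose levels `p k ↑ 1` and nodes `x k = G⁻¹(p k)` recursively so that
`1 - G(x (k+1)-) ≥ (k+1)/(k+2) · (1 - G(x k))`; regularity then yields
`1 - G(x k) ≤ (1 + ε) (1 - G(x (k+1)))` for large `k`. Let `H` interpolate `G` linearly between
consecutive nodes. On `[x k, x (k+1)]` both `G` and `H` take values in `[G(x k), G(x (k+1))]`, and
for `a ≤ b` in such an interval `b ^ n - a ^ n ≤ ε (1 - b ^ n)` for every `n`; below a fixed node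
both powers are uniformly small, and beyond all nodes both functions equal `1`. Hence
`sup_x |G(x) ^ n - H(x) ^ n| → 0`, and `H` inherits the phantom property from `G`.
-/

lemma IsDistFun.nonneg {G : ℝ → ℝ} (hG : IsDistFun G) (x : ℝ) : 0 ≤ G x :=
  le_of_tendsto hG.2.2.1 <| (eventually_le_atBot x).mono fun _ hy ↦ hG.1 hy

lemma IsDistFun.le_one {G : ℝ → ℝ} (hG : IsDistFun G) (x : ℝ) : G x ≤ 1 :=
  ge_of_tendsto hG.2.2.2 <| (eventually_ge_atTop x).mono fun _ hy ↦ hG.1 hy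

def ramp (a b z : ℝ) : ℝ := max 0 (min 1 ((z - a) / (b - a)))

section Ramp

variable {a b z : ℝ}

lemma ramp_nonneg : 0 ≤ ramp a b z := le_max_left _ _

lemma ramp_le_one : ramp a b z ≤ 1 := max_le zero_le_one (min_le_left _ _)

lemma continuous_ramp (a b : ℝ) : Continuous (ramp a b) := by
  unfold ramp; fun_prop

lemma monotone_ramp (hab : a ≤ b) : Monotone (ramp a b) := fun _ _ h ↦
  max_le_max le_rfl <| min_le_min le_rfl <| div_le_div_of_nonneg_right (by linarith) (by linarith)

lemma ramp_of_le_left (hab : a ≤ b) (hz : z ≤ a) : ramp a b z = 0 :=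
  max_eq_left <| (min_le_right _ _).trans <|
    div_nonpos_of_nonpos_of_nonneg (by linarith) (by linarith)

lemma ramp_of_right_le (hab : a < b) (hz : b ≤ z) : ramp a b z = 1 := by
  rw [ramp, min_eq_left ((le_div_iff₀ (by linarith)).2 (by linarith)), max_eq_right zero_le_one]

end Ramp

-- The piecewise linear function through the points `(x k, y k)`, constant `y 0` left of `x 0`.
def interp (x y : ℕ → ℝ) (z : ℝ) : ℝ :=
  y 0 + ∑' k, (y (k + 1) - y k) * ramp (x k) (x (k + 1)) z

section Interp

variable {x y : ℕ → ℝ} {L z : ℝ}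

lemma hasSum_sub_of_tendsto (hy : Monotone y) (hL : Tendsto y atTop (𝓝 L)) :
    HasSum (fun k ↦ y (k + 1) - y k) (L - y 0) := by
  rw [hasSum_iff_tendsto_nat_of_nonneg (fun k ↦ sub_nonneg.2 (hy k.le_succ))]
  simpa only [Finset.sum_range_sub] using hL.sub_const (y 0)

lemma summable_interp_terms (hy : Monotone y) (hL : Tendsto y atTop (𝓝 L)) (z : ℝ) :
    Summable fun k ↦ (y (k + 1) - y k) * ramp (x k) (x (k + 1)) z :=
  (hasSum_sub_of_tendsto hy hL).summable.of_nonneg_of_le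
    (fun k ↦ mul_nonneg (sub_nonneg.2 (hy k.le_succ)) ramp_nonneg)
    (fun k ↦ mul_le_of_le_one_right (sub_nonneg.2 (hy k.le_succ)) ramp_le_one)

lemma interp_eq_of_mem_Icc (hx : StrictMono x) {k : ℕ} (hz : z ∈ Icc (x k) (x (k + 1))) :
    interp x y z = y k + (y (k + 1) - y k) * ramp (x k) (x (k + 1)) z := by
  have hfar : ∀ j ∉ Finset.range (k + 1), (y (j + 1) - y j) * ramp (x j) (x (j + 1)) z = 0 := by
    intro j hj
    rw [Finset.mem_range, not_lt] at hj
    rw [ramp_of_le_left (hx.monotone j.le_succ) (hz.2.trans (hx.monotone hj)), mul_zero]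
  have hnear : ∀ j ∈ Finset.range k,
      (y (j + 1) - y j) * ramp (x j) (x (j + 1)) z = y (j + 1) - y j := by
    intro j hj
    rw [ramp_of_right_le (hx j.lt_succ_self) ((hx.monotone (Finset.mem_range.1 hj)).trans hz.1),
      mul_one]
  rw [interp, tsum_eq_sum hfar, Finset.sum_range_succ, Finset.sum_congr rfl hnear,
    Finset.sum_range_sub]
  ring

lemma interp_apply (hx : StrictMono x) (k : ℕ) : interp x y (x k) = y k := by
  rw [interp_eq_of_mem_Icc hx ⟨le_rfl, (hx k.lt_succ_self).le⟩,
    ramp_of_le_left (hx k.lt_succ_self).le le_rfl, mul_zero, add_zero]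

lemma interp_of_le (hx : Monotone x) (hz : z ≤ x 0) : interp x y z = y 0 := by
  have hzero : ∀ k, (y (k + 1) - y k) * ramp (x k) (x (k + 1)) z = 0 := fun k ↦ by
    rw [ramp_of_le_left (hx k.le_succ) (hz.trans (hx k.zero_le)), mul_zero]
  simp only [interp, hzero, tsum_zero, add_zero]

lemma monotone_interp (hx : Monotone x) (hy : Monotone y) (hL : Tendsto y atTop (𝓝 L)) :
    Monotone (interp x y) := fun _ _ h ↦
  add_le_add le_rfl (Summable.tsum_le_tsum
    (fun k ↦ mul_le_mul_of_nonneg_left (monotone_ramp (hx k.le_succ) h)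
      (sub_nonneg.2 (hy k.le_succ)))
    (summable_interp_terms hy hL _) (summable_interp_terms hy hL _))

lemma continuous_interp (hy : Monotone y) (hL : Tendsto y atTop (𝓝 L)) :
    Continuous (interp x y) := by
  refine continuous_const.add <|
    continuous_tsum (fun k ↦ continuous_const.mul (continuous_ramp _ _))
    (hasSum_sub_of_tendsto hy hL).summable fun k z ↦ ?_
  rw [Real.norm_eq_abs, abs_of_nonneg (mul_nonneg (sub_nonneg.2 (hy k.le_succ)) ramp_nonneg)]
  exact mul_le_of_le_one_right (sub_nonneg.2 (hy k.le_succ)) ramp_le_one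

lemma interp_le (hy : Monotone y) (hL : Tendsto y atTop (𝓝 L)) (z : ℝ) : interp x y z ≤ L := by
  have := Summable.tsum_le_tsum
    (fun k ↦ mul_le_of_le_one_right (sub_nonneg.2 (hy k.le_succ)) ramp_le_one)
    (summable_interp_terms (x := x) hy hL z) (hasSum_sub_of_tendsto hy hL).summable
  rw [(hasSum_sub_of_tendsto hy hL).tsum_eq] at this
  rw [interp]
  linarith

lemma tendsto_interp_atTop (hx : StrictMono x) (hy : Monotone y) (hL : Tendsto y atTop (𝓝 L)) :
    Tendsto (interp x y) atTop (𝓝 L) := by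
  refine tendsto_order.2
    ⟨fun a ha ↦ ?_, fun a ha ↦ .of_forall fun z ↦ (interp_le hy hL z).trans_lt ha⟩
  obtain ⟨k, hk⟩ := (hL.eventually_const_lt ha).exists
  filter_upwards [eventually_ge_atTop (x k)] with z hz
  calc a < y k := hk
    _ = interp x y (x k) := (interp_apply hx k).symm
    _ ≤ interp x y z := monotone_interp hx.monotone hy hL hz

lemma isDistFun_interp (hx : StrictMono x) (hy : Monotone y) (h0 : y 0 = 0)
    (h1 : Tendsto y atTop (𝓝 1)) : IsDistFun (interp x y) := by
  refine ⟨monotone_interp hx.monotone hy h1,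
    fun z ↦ (continuous_interp hy h1).continuousWithinAt, ?_, tendsto_interp_atTop hx hy h1⟩
  rw [← h0]
  exact tendsto_const_nhds.congr' <| (eventually_le_atBot (x 0)).mono fun z hz ↦
    (interp_of_le hx.monotone hz).symm

end Interp

lemma pow_sub_pow_le_mul_one_sub_pow {b c ε : ℝ} (hc : 0 ≤ c) (hcb : c ≤ b) (hb : b ≤ 1)
    (h : b - c ≤ ε * (1 - b)) (n : ℕ) : b ^ n - c ^ n ≤ ε * (1 - b ^ n) := by
  induction n with
  | zero => simp
  | succ n ih =>
    have hbn : b * (b ^ n - c ^ n) ≤ b * (ε * (1 - b ^ n)) :=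
      mul_le_mul_of_nonneg_left ih (hc.trans hcb)
    have hcn : c ^ n * (b - c) ≤ b - c :=
      mul_le_of_le_one_left (by linarith) (pow_le_one₀ hc (hcb.trans hb))
    calc b ^ (n + 1) - c ^ (n + 1) = b * (b ^ n - c ^ n) + c ^ n * (b - c) := by ring
      _ ≤ b * (ε * (1 - b ^ n)) + ε * (1 - b) := by linarith
      _ = ε * (1 - b ^ (n + 1)) := by ring

lemma abs_pow_sub_pow_le_of_mem_Icc {a b lo hi ε : ℝ} (hlo : 0 ≤ lo) (hhi : hi ≤ 1)
    (hε : 0 ≤ ε) (hgap : hi - lo ≤ ε * (1 - hi)) (ha : a ∈ Icc lo hi) (hb : b ∈ Icc lo hi)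
    (n : ℕ) : |a ^ n - b ^ n| ≤ ε := by
  wlog hab : a ≤ b generalizing a b
  · rw [abs_sub_comm]; exact this hb ha (le_of_not_ge hab)
  have hb1 : b ≤ 1 := hb.2.trans hhi
  have hle : b ^ n - a ^ n ≤ ε * (1 - b ^ n) :=
    pow_sub_pow_le_mul_one_sub_pow (hlo.trans ha.1) hab hb1
      (by nlinarith [mul_le_mul_of_nonneg_left hb.2 hε, ha.1, hb.2]) n
  rw [abs_sub_comm, abs_of_nonneg (sub_nonneg.2 (pow_le_pow_left₀ (hlo.trans ha.1) hab n))]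
  nlinarith [pow_nonneg (hlo.trans hb.1) n]

lemma exists_mem_Icc_of_le_of_lt {x : ℕ → ℝ} (hx : Monotone x) {K m : ℕ} {z : ℝ}
    (hK : x K ≤ z) (hm : z < x m) : ∃ k, K ≤ k ∧ z ∈ Icc (x k) (x (k + 1)) := by
  induction m with
  | zero => exact absurd ((hx K.zero_le).trans hK) (not_le.2 hm)
  | succ m ih =>
    by_cases hzm : z < x m
    · exact ih hzm
    · refine ⟨m, ?_, le_of_not_gt hzm, hm.le⟩
      by_contra! hmK
      exact absurd ((hx hmK).trans hK) (not_le.2 hm)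

lemma eq_one_of_forall_le {F : ℝ → ℝ} (hF : IsDistFun F) {x y : ℕ → ℝ}
    (hFy : ∀ k, F (x k) = y k) (hy : Tendsto y atTop (𝓝 1)) {z : ℝ} (hz : ∀ k, x k ≤ z) :
    F z = 1 :=
  le_antisymm (hF.le_one z) <| le_of_tendsto hy <| .of_forall fun k ↦ hFy k ▸ hF.1 (hz k)

theorem eventually_abs_pow_sub_pow_le {F₁ F₂ : ℝ → ℝ} (hF₁ : IsDistFun F₁) (hF₂ : IsDistFun F₂)
    {x y : ℕ → ℝ} (hx : Monotone x) (hF₁y : ∀ k, F₁ (x k) = y k) (hF₂y : ∀ k, F₂ (x k) = y k)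
    (hy1 : ∀ k, y k < 1) (hy : Tendsto y atTop (𝓝 1))
    (hgap : ∀ ε > 0, ∀ᶠ k in atTop, y (k + 1) - y k ≤ ε * (1 - y (k + 1))) :
    ∀ ε > 0, ∀ᶠ n in atTop, ∀ z, |F₁ z ^ n - F₂ z ^ n| ≤ ε := by
  intro ε hε
  obtain ⟨K, hK⟩ := eventually_atTop.1 (hgap ε hε)
  have hy0 : 0 ≤ y K := hF₁y K ▸ hF₁.nonneg _
  filter_upwards [(tendsto_pow_atTop_nhds_zero_of_lt_one hy0 (hy1 K)).eventually_le_const hε]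
    with n hn z
  have hmem {F : ℝ → ℝ} (hF : IsDistFun F) (hFy : ∀ k, F (x k) = y k) {k : ℕ}
      (hz : z ∈ Icc (x k) (x (k + 1))) : F z ∈ Icc (y k) (y (k + 1)) :=
    ⟨hFy k ▸ hF.1 hz.1, hFy (k + 1) ▸ hF.1 hz.2⟩
  by_cases hzK : z ≤ x K
  · have hpow {F : ℝ → ℝ} (hF : IsDistFun F) (hFy : ∀ k, F (x k) = y k) : F z ^ n ≤ y K ^ n :=
      pow_le_pow_left₀ (hF.nonneg z) (hFy K ▸ hF.1 hzK) n
    exact abs_sub_le_of_nonneg_of_le (pow_nonneg (hF₁.nonneg z) n) ((hpow hF₁ hF₁y).trans hn)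
      (pow_nonneg (hF₂.nonneg z) n) ((hpow hF₂ hF₂y).trans hn)
  by_cases hbelow : ∃ m, z < x m
  · obtain ⟨m, hm⟩ := hbelow
    obtain ⟨k, hKk, hz⟩ := exists_mem_Icc_of_le_of_lt hx (le_of_not_ge hzK) hm
    exact abs_pow_sub_pow_le_of_mem_Icc (hF₁y k ▸ hF₁.nonneg _) (hy1 _).le hε.le
      (hK k hKk) (hmem hF₁ hF₁y hz) (hmem hF₂ hF₂y hz) n
  · push Not at hbelow
    rw [eq_one_of_forall_le hF₁ hF₁y hy hbelow, eq_one_of_forall_le hF₂ hF₂y hy hbelow]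
    simpa using hε.le

lemma IsPhantom.of_eventually_abs_pow_sub_pow_le {Ω : Type*} [MeasurableSpace Ω]
    {P : Measure Ω} [IsProbabilityMeasure P] {X : ℕ → Ω → ℝ} {G H : ℝ → ℝ}
    (hph : IsPhantom P X G) (hG : IsDistFun G)
    (hGH : ∀ ε > 0, ∀ᶠ n in atTop, ∀ x, |G x ^ n - H x ^ n| ≤ ε) : IsPhantom P X H := by
  have hbdd (n : ℕ) : BddAbove (range fun x ↦ |(P (maxEvent X n x)).toReal - G x ^ n|) := by
    refine ⟨1, ?_⟩
    rintro _ ⟨x, rfl⟩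
    exact abs_sub_le_of_nonneg_of_le ENNReal.toReal_nonneg
      (ENNReal.toReal_le_of_le_ofReal zero_le_one (by simpa using prob_le_one))
      (pow_nonneg (hG.nonneg x) n) (pow_le_one₀ (hG.nonneg x) (hG.le_one x))
  refine tendsto_order.2 ⟨fun a ha ↦ .of_forall fun n ↦ ha.trans_le
    (Real.iSup_nonneg fun _ ↦ abs_nonneg _), fun a ha ↦ ?_⟩
  filter_upwards [hph.eventually_lt_const (half_pos ha), hGH (a / 2) (half_pos ha)] with n hn hGHn
  have hA : 0 ≤ ⨆ x, |(P (maxEvent X n x)).toReal - G x ^ n| :=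
    Real.iSup_nonneg fun _ ↦ abs_nonneg _
  calc (⨆ x, |(P (maxEvent X n x)).toReal - H x ^ n|)
      ≤ (⨆ x, |(P (maxEvent X n x)).toReal - G x ^ n|) + a / 2 := by
        refine Real.iSup_le (fun x ↦ ?_) (by linarith)
        calc |(P (maxEvent X n x)).toReal - H x ^ n|
            ≤ |(P (maxEvent X n x)).toReal - G x ^ n| + |G x ^ n - H x ^ n| := abs_sub_le _ _ _
          _ ≤ _ := add_le_add (le_ciSup (hbdd n) x) (hGHn x)
    _ < a := by linarith

def quantile (G : ℝ → ℝ) (p : ℝ) : ℝ := sInf {y | p ≤ G y}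

section Quantile

variable {G : ℝ → ℝ} {p y : ℝ}

lemma IsDistFun.bddBelow_setOf_le (hG : IsDistFun G) (hp : 0 < p) : BddBelow {y | p ≤ G y} := by
  obtain ⟨b, hb⟩ := (hG.2.2.1.eventually_lt_const hp).exists_forall_of_atBot
  exact ⟨b, fun y hy ↦ le_of_not_gt fun hyb ↦ (hb y hyb.le).not_ge hy⟩

lemma IsDistFun.quantile_le (hG : IsDistFun G) (hp : 0 < p) (hy : p ≤ G y) : quantile G p ≤ y :=
  csInf_le (hG.bddBelow_setOf_le hp) hy

lemma IsDistFun.apply_lt_of_lt_quantile (hG : IsDistFun G) (hp : 0 < p) (hy : y < quantile G p) :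
    G y < p :=
  lt_of_not_ge fun h ↦ hy.not_ge (hG.quantile_le hp h)

lemma IsDistFun.le_apply_quantile (hG : IsDistFun G) (hp0 : 0 < p) (hp1 : p < 1) :
    p ≤ G (quantile G p) := by
  have hne : {y | p ≤ G y}.Nonempty := (hG.2.2.2.eventually_const_le hp1).exists
  have hsub : {y | p ≤ G y} ⊆ Ici (quantile G p) := fun _ hy ↦ hG.quantile_le hp0 hy
  have : (𝓝[{y | p ≤ G y}] quantile G p).NeBot :=
    mem_closure_iff_nhdsWithin_neBot.1 (csInf_mem_closure hne (hG.bddBelow_setOf_le hp0))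
  exact ge_of_tendsto ((hG.2.1 _).mono hsub) eventually_mem_nhdsWithin

lemma IsDistFun.lt_quantile_of_apply_lt (hG : IsDistFun G) (hp0 : 0 < p) (hp1 : p < 1)
    (hy : G y < p) : y < quantile G p :=
  lt_of_not_ge fun h ↦ (hy.trans_le (hG.le_apply_quantile hp0 hp1)).not_ge (hG.1 h)

lemma IsDistFun.leftLim_quantile_le (hG : IsDistFun G) (hp : 0 < p) :
    Function.leftLim G (quantile G p) ≤ p :=
  le_of_tendsto (hG.1.tendsto_leftLim _) <| eventually_nhdsWithin_of_forall fun _ hy ↦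
    (hG.apply_lt_of_lt_quantile hp hy).le

end Quantile

section RightEnd

variable {G : ℝ → ℝ} {x : ℝ}

lemma apply_lt_one_of_coe_lt_GstarE (hG : Monotone G) (hx : (x : EReal) < GstarE G) : G x < 1 := by
  obtain ⟨_, ⟨s, hs, rfl⟩, hxs⟩ := lt_sSup_iff.1 hx
  exact (hG (EReal.coe_lt_coe_iff.1 hxs).le).trans_lt hs

lemma coe_le_GstarE (hx : G x < 1) : (x : EReal) ≤ GstarE G :=
  le_sSup (mem_image_of_mem _ hx)

lemma IsDistFun.leftFilter_neBot (hG : IsDistFun G) : (leftFilter (GstarE G)).NeBot := by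
  obtain ⟨x, hx⟩ := (hG.2.2.1.eventually_lt_const zero_lt_one).exists
  have hbot : (⊥ : EReal) < GstarE G := (EReal.bot_lt_coe x).trans_le (coe_le_GstarE hx)
  refine NeBot.comap_of_range_mem (nhdsLT_neBot_of_exists_lt ⟨⊥, hbot⟩) ?_
  refine mem_of_superset (Ioo_mem_nhdsLT hbot) fun e he ↦ ?_
  induction e using EReal.rec with
  | bot => exact absurd he.1 (lt_irrefl _)
  | top => exact absurd he.2 (not_lt.2 le_top)
  | coe r => exact mem_range_self r

lemma IsRegularDF.exists_between (hG : IsDistFun G) (hreg : IsRegularDF G) {p : ℝ} (hp : p < 1) :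
    ∃ s, p < G s ∧ G s < 1 := by
  have := hG.leftFilter_neBot
  have hlt : ∀ᶠ x : ℝ in leftFilter (GstarE G), (x : EReal) < GstarE G :=
    preimage_mem_comap self_mem_nhdsWithin
  exact ((hreg.1.eventually_const_lt hp).and
    (hlt.mono fun _ ↦ apply_lt_one_of_coe_lt_GstarE hG.1)).exists

lemma IsRegularDF.apply_quantile_lt_one (hG : IsDistFun G) (hreg : IsRegularDF G) {p : ℝ}
    (hp0 : 0 < p) (hp1 : p < 1) : G (quantile G p) < 1 := by
  obtain ⟨s, hps, hs1⟩ := hreg.exists_between hG hp1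
  exact (hG.1 (hG.quantile_le hp0 hps.le)).trans_lt hs1

end RightEnd

-- The factor `(k+1)/(k+2) → 1` keeps consecutive tails `1 - G (node G k)` comparable, while its
-- partial products `1/(k+1)` force `G (node G k) → 1`.
def level (G : ℝ → ℝ) : ℕ → ℝ
  | 0 => 1 / 2
  | k + 1 => 1 - (1 - G (quantile G (level G k))) * (((k : ℝ) + 1) / (k + 2))

def node (G : ℝ → ℝ) (k : ℕ) : ℝ := quantile G (level G k)

section Nodes

variable {G : ℝ → ℝ}

lemma level_succ (k : ℕ) :
    level G (k + 1) = 1 - (1 - G (node G k)) * (((k : ℝ) + 1) / (k + 2)) := rfl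

lemma succ_div_succ_succ_mem_Ioo (k : ℕ) : ((k : ℝ) + 1) / (k + 2) ∈ Ioo 0 1 :=
  ⟨by positivity, (div_lt_one (by positivity)).2 (by linarith)⟩

lemma level_mem_Ioo (hG : IsDistFun G) (hreg : IsRegularDF G) (k : ℕ) : level G k ∈ Ioo 0 1 := by
  induction k with
  | zero => norm_num [level]
  | succ k ih =>
    have hy0 : 0 < G (node G k) := ih.1.trans_le (hG.le_apply_quantile ih.1 ih.2)
    have hy1 : G (node G k) < 1 := hreg.apply_quantile_lt_one hG ih.1 ih.2
    obtain ⟨hr0, hr1⟩ := succ_div_succ_succ_mem_Ioo k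
    rw [level_succ]
    constructor <;> nlinarith

lemma level_le_apply_node (hG : IsDistFun G) (hreg : IsRegularDF G) (k : ℕ) :
    level G k ≤ G (node G k) :=
  hG.le_apply_quantile (level_mem_Ioo hG hreg k).1 (level_mem_Ioo hG hreg k).2

lemma apply_node_lt_one (hG : IsDistFun G) (hreg : IsRegularDF G) (k : ℕ) : G (node G k) < 1 :=
  hreg.apply_quantile_lt_one hG (level_mem_Ioo hG hreg k).1 (level_mem_Ioo hG hreg k).2

lemma apply_node_lt_level_succ (hG : IsDistFun G) (hreg : IsRegularDF G) (k : ℕ) :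
    G (node G k) < level G (k + 1) := by
  have hu : 0 < 1 - G (node G k) := sub_pos.2 (apply_node_lt_one hG hreg k)
  have := mul_lt_of_lt_one_right hu (succ_div_succ_succ_mem_Ioo k).2
  rw [level_succ]
  linarith

lemma strictMono_node (hG : IsDistFun G) (hreg : IsRegularDF G) : StrictMono (node G) :=
  strictMono_nat_of_lt_succ fun k ↦ hG.lt_quantile_of_apply_lt (level_mem_Ioo hG hreg (k + 1)).1
    (level_mem_Ioo hG hreg (k + 1)).2 (apply_node_lt_level_succ hG hreg k)

lemma succ_mul_one_sub_apply_node_le (hG : IsDistFun G) (hreg : IsRegularDF G) (k : ℕ) :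
    ((k : ℝ) + 1) * (1 - G (node G k)) ≤ 1 / 2 := by
  induction k with
  | zero =>
    have := level_le_apply_node hG hreg 0
    norm_num [level] at this ⊢
    linarith
  | succ k ih =>
    have h := level_le_apply_node hG hreg (k + 1)
    rw [level_succ] at h
    have hk : ((k : ℝ) + 2) * (((k : ℝ) + 1) / (k + 2)) = k + 1 := by field_simp
    rw [show ((k + 1 : ℕ) + 1 : ℝ) = k + 2 by push_cast; ring]
    calc ((k : ℝ) + 2) * (1 - G (node G (k + 1)))
        ≤ (k + 2) * ((1 - G (node G k)) * (((k : ℝ) + 1) / (k + 2))) :=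
          mul_le_mul_of_nonneg_left (by linarith) (by positivity)
      _ = (1 - G (node G k)) * (k + 1) := by rw [mul_left_comm, hk]
      _ ≤ 1 / 2 := by linarith

lemma tendsto_apply_node (hG : IsDistFun G) (hreg : IsRegularDF G) :
    Tendsto (fun k ↦ G (node G k)) atTop (𝓝 1) := by
  have hbound : Tendsto (fun k : ℕ ↦ 1 / 2 * (1 / ((k : ℝ) + 1))) atTop (𝓝 0) :=
    mul_zero (1 / 2 : ℝ) ▸ (tendsto_one_div_add_atTop_nhds_zero_nat (𝕜 := ℝ)).const_mul (1 / 2)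
  have hu : Tendsto (fun k ↦ 1 - G (node G k)) atTop (𝓝 0) := by
    refine squeeze_zero (fun k ↦ sub_nonneg.2 (hG.le_one _)) (fun k ↦ ?_) hbound
    rw [mul_one_div, le_div_iff₀ (by positivity), mul_comm]
    exact succ_mul_one_sub_apply_node_le hG hreg k
  simpa using (tendsto_const_nhds (x := (1 : ℝ))).sub hu

lemma coe_node_lt_GstarE (hG : IsDistFun G) (hreg : IsRegularDF G) (k : ℕ) :
    (node G k : EReal) < GstarE G :=
  (EReal.coe_lt_coe_iff.2 (strictMono_node hG hreg k.lt_succ_self)).trans_le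
    (coe_le_GstarE (apply_node_lt_one hG hreg (k + 1)))

lemma iSup_coe_node (hG : IsDistFun G) (hreg : IsRegularDF G) :
    ⨆ k, (node G k : EReal) = GstarE G := by
  refine le_antisymm (iSup_le fun k ↦ (coe_node_lt_GstarE hG hreg k).le) (sSup_le ?_)
  rintro _ ⟨s, hs, rfl⟩
  obtain ⟨k, hk⟩ := ((tendsto_apply_node hG hreg).eventually_const_lt hs).exists
  exact le_iSup_of_le k <| EReal.coe_le_coe_iff.2 <| le_of_not_ge fun h ↦ (hG.1 h).not_gt hk

lemma tendsto_node_leftFilter (hG : IsDistFun G) (hreg : IsRegularDF G) :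
    Tendsto (node G) atTop (leftFilter (GstarE G)) := by
  refine tendsto_comap_iff.2 <|
    tendsto_nhdsWithin_iff.2 ⟨?_, .of_forall (coe_node_lt_GstarE hG hreg)⟩
  rw [← iSup_coe_node hG hreg]
  exact tendsto_atTop_iSup fun _ _ h ↦ EReal.coe_le_coe_iff.2 ((strictMono_node hG hreg).monotone h)

lemma eventually_apply_node_succ_sub_le (hG : IsDistFun G) (hreg : IsRegularDF G) {ε : ℝ}
    (hε : 0 < ε) : ∀ᶠ k in atTop,
      G (node G (k + 1)) - G (node G k) ≤ ε * (1 - G (node G (k + 1))) := by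
  have hratio : Tendsto (fun k ↦ (1 - Function.leftLim G (node G (k + 1))) /
      (1 - G (node G (k + 1)))) atTop (𝓝 1) :=
    (tendsto_add_atTop_iff_nat 1).2 (hreg.2.comp (tendsto_node_leftFilter hG hreg))
  have hfactor : Tendsto (fun k : ℕ ↦ ((k : ℝ) + 1) / (k + 2)) atTop (𝓝 1) :=
    ((tendsto_add_atTop_iff_nat 1).2 (tendsto_natCast_div_add_atTop (1 : ℝ))).congr fun k ↦ by
      push_cast; ring
  filter_upwards [hratio.eventually_lt (hfactor.const_mul (1 + ε)) (by linarith)] with k hk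
  obtain ⟨hr0, -⟩ := succ_div_succ_succ_mem_Ioo k
  have hu : 0 < 1 - G (node G (k + 1)) := sub_pos.2 (apply_node_lt_one hG hreg (k + 1))
  have hleft := hG.leftLim_quantile_le (level_mem_Ioo hG hreg (k + 1)).1
  rw [← node, level_succ] at hleft
  rw [div_lt_iff₀ hu] at hk
  have : 1 - G (node G k) < (1 + ε) * (1 - G (node G (k + 1))) :=
    lt_of_mul_lt_mul_right (by linarith) hr0.le
  linarith

end Nodes

-- The nodes shifted by one place, preceded by a knot `node G 0 - 1` at which the approximant
-- vanishes, so that it tends to `0` at `-∞`.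
def knot (G : ℝ → ℝ) : ℕ → ℝ
  | 0 => node G 0 - 1
  | k + 1 => node G k

def knotValue (G : ℝ → ℝ) : ℕ → ℝ
  | 0 => 0
  | k + 1 => G (node G k)

section Knots

variable {G : ℝ → ℝ}

lemma strictMono_knot (hG : IsDistFun G) (hreg : IsRegularDF G) : StrictMono (knot G) :=
  strictMono_nat_of_lt_succ fun k ↦ by
    cases k with
    | zero => exact sub_one_lt _
    | succ k => exact strictMono_node hG hreg k.lt_succ_self

lemma monotone_knotValue (hG : IsDistFun G) (hreg : IsRegularDF G) : Monotone (knotValue G) :=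
  monotone_nat_of_le_succ fun k ↦ by
    cases k with
    | zero => exact hG.nonneg _
    | succ k => exact hG.1 ((strictMono_node hG hreg).monotone k.le_succ)

lemma tendsto_knotValue (hG : IsDistFun G) (hreg : IsRegularDF G) :
    Tendsto (knotValue G) atTop (𝓝 1) :=
  (tendsto_add_atTop_iff_nat 1).1 (tendsto_apply_node hG hreg)

end Knots

theorem IsRegularDF.exists_continuous_eventually_abs_pow_sub_pow_le {G : ℝ → ℝ}
    (hG : IsDistFun G) (hreg : IsRegularDF G) :
    ∃ H : ℝ → ℝ, IsDistFun H ∧ Continuous H ∧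
      ∀ ε > 0, ∀ᶠ n in atTop, ∀ x, |G x ^ n - H x ^ n| ≤ ε := by
  have hH := isDistFun_interp (strictMono_knot hG hreg) (monotone_knotValue hG hreg) rfl
    (tendsto_knotValue hG hreg)
  refine ⟨interp (knot G) (knotValue G), hH,
    continuous_interp (monotone_knotValue hG hreg) (tendsto_knotValue hG hreg), ?_⟩
  exact eventually_abs_pow_sub_pow_le hG hH (strictMono_node hG hreg).monotone (fun _ ↦ rfl)
    (fun k ↦ interp_apply (strictMono_knot hG hreg) (k + 1)) (apply_node_lt_one hG hreg)
    (tendsto_apply_node hG hreg) fun _ ↦ eventually_apply_node_succ_sub_le hG hreg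

theorem continuous_phantom_of_regular_phantom_general {Ω : Type*} [MeasurableSpace Ω]
    (P : Measure Ω) [IsProbabilityMeasure P] (X : ℕ → Ω → ℝ)
    (G : ℝ → ℝ) (hG : IsDistFun G)
    (hreg : IsRegularDF G) (hph : IsPhantom P X G) :
    ∃ H : ℝ → ℝ, IsDistFun H ∧ Continuous H ∧ IsPhantom P X H := by
  obtain ⟨H, hH, hHc, hGH⟩ := hreg.exists_continuous_eventually_abs_pow_sub_pow_le hG
  exact ⟨H, hH, hHc, hph.of_eventually_abs_pow_sub_pow_le hG hGH⟩

theorem continuous_phantom_of_regular_phantom {Ω : Type*} [MeasurableSpace Ω]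
    (P : Measure Ω) [IsProbabilityMeasure P] (X : ℕ → Ω → ℝ)
    (hX : ∀ j, Measurable (X j)) (G : ℝ → ℝ) (hG : IsDistFun G)
    (hreg : IsRegularDF G) (hph : IsPhantom P X G) :
    ∃ H : ℝ → ℝ, IsDistFun H ∧ Continuous H ∧ IsPhantom P X H :=
  continuous_phantom_of_regular_phantom_general P X G hG hreg hph
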